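/- arXiv:1008.2388 — 8 statements merged into one kernel-verified Lean document; each statement's English description precedes it below -/
import Mathlib

section
/- Every alternative ring satisfies the identity [x,y] ∘ (x,y,z) = 0, where a ∘ b = ab + ba, [x,y] = xy - yx, and (x,y,z) = (xy)z - x(yz). -/
/-- Every alternative ring satisfies `[x,y] ∘ (x,y,z) = 0`,
where `a ∘ b = ab + ba`. -/
theorem alternative_comm_circ_assoc (A : Type*) [NonUnitalNonAssocRing A]
    (assoc : A → A → A → A)
    (hassoc : ∀ x y z : A, assoc x y z = x * y * z - x * (y * z))
    (br : A → A → A) (hbr : ∀ x y : A, br x y = x * y - y * x)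
    (circ : A → A → A) (hcirc : ∀ x y : A, circ x y = x * y + y * x)
    (hleft : ∀ a b : A, assoc a a b = 0)
    (hright : ∀ a b : A, assoc b a a = 0) :
    ∀ x y z : A, circ (br x y) (assoc x y z) = 0 := by
  have hLz : ∀ a b : A, a * a * b - a * (a * b) = 0 := fun a b => by
    have h := hleft a b; rwa [hassoc] at h
  have hRz : ∀ a b : A, a * b * b - a * (b * b) = 0 := fun a b => by
    have h := hright b a; rwa [hassoc] at h
  have hLL : ∀ a b c : A, ((a * b * c - a * (b * c)) + (b * a * c - b * (a * c))) = 0 := by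
    intro a b c
    have key : ((a * b * c - a * (b * c)) + (b * a * c - b * (a * c))) = ((a + b) * (a + b) * c - (a + b) * ((a + b) * c)) - (a * a * c - a * (a * c)) - (b * b * c - b * (b * c)) := by
      simp only [mul_add, add_mul, mul_sub, sub_mul]
      abel
    rw [key, hLz (a + b) c, hLz a c, hLz b c]
    simp
  have hRR : ∀ a b c : A, ((a * b * c - a * (b * c)) + (a * c * b - a * (c * b))) = 0 := by
    intro a b c
    have key : ((a * b * c - a * (b * c)) + (a * c * b - a * (c * b))) = (a * (b + c) * (b + c) - a * ((b + c) * (b + c))) - (a * b * b - a * (b * b)) - (a * c * c - a * (c * c)) := by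
      simp only [mul_add, add_mul, mul_sub, sub_mul]
      abel
    rw [key, hRz a (b + c), hRz a b, hRz a c]
    simp
  have hP1 : ∀ a b c : A, (((a * b) * b * c - (a * b) * (b * c)) - b * (a * b * c - a * (b * c))) = 0 := by
    intro a b c
    have key : (((a * b) * b * c - (a * b) * (b * c)) - b * (a * b * c - a * (b * c))) = ((a * b * b - a * (b * b)) * c) - ((b * a * (b * c) - b * (a * (b * c))) + (a * b * (b * c) - a * (b * (b * c)))) + (a * (b * b * c - b * (b * c))) + (((b * b) * a * c - (b * b) * (a * c)) + (a * (b * b) * c - a * ((b * b) * c))) - (((b * b) * c * a - (b * b) * (c * a)) + ((b * b) * a * c - (b * b) * (a * c))) + ((b * b * c - b * (b * c)) * a) + ((b * (b * c) * a - b * ((b * c) * a)) + (b * a * (b * c) - b * (a * (b * c)))) - (b * ((b * a * c - b * (a * c)) + (a * b * c - a * (b * c)))) + (b * ((b * c * a - b * (c * a)) + (b * a * c - b * (a * c)))) - (b * b * (c * a) - b * (b * (c * a))) := by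
      simp only [mul_add, add_mul, mul_sub, sub_mul]
      abel
    rw [key, hRz a b, hLL b a (b * c), hLz b c, hLL (b * b) a c, hRR (b * b) c a, hRR b (b * c) a, hLL b a c, hRR b c a, hLz b (c * a)]
    simp
  have hP3 : ∀ a b c : A, ((a * b * (b * c) - a * (b * (b * c))) - (a * b * c - a * (b * c)) * b) = 0 := by
    intro a b c
    have key : ((a * b * (b * c) - a * (b * (b * c))) - (a * b * c - a * (b * c)) * b) = -(((a * b) * c * b - (a * b) * (c * b)) + ((a * b) * b * c - (a * b) * (b * c))) + (a * (b * b * c - b * (b * c))) + ((a * b * b - a * (b * b)) * c) + ((a * c * (b * b) - a * (c * (b * b))) + (a * (b * b) * c - a * ((b * b) * c))) - ((c * a * (b * b) - c * (a * (b * b))) + (a * c * (b * b) - a * (c * (b * b)))) + (c * (a * b * b - a * (b * b))) + ((c * (a * b) * b - c * ((a * b) * b)) + ((a * b) * c * b - (a * b) * (c * b))) - (((a * c * b - a * (c * b)) + (a * b * c - a * (b * c))) * b) + (((c * a * b - c * (a * b)) + (a * c * b - a * (c * b))) * b) - ((c * a) * b * b - (c * a) * (b * b)) := by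
      simp only [mul_add, add_mul, mul_sub, sub_mul]
      abel
    rw [key, hRR (a * b) c b, hLz b c, hRz a b, hRR a c (b * b), hLL c a (b * b), hLL c (a * b) b, hRR a c b, hLL c a b, hRz (c * a) b]
    simp
  have hLA : ∀ a b c : A, (((a * a) * b * c - (a * a) * (b * c)) - (a * (a * b * c - a * (b * c)) + (a * b * c - a * (b * c)) * a)) = 0 := by
    intro a b c
    have key : (((a * a) * b * c - (a * a) * (b * c)) - (a * (a * b * c - a * (b * c)) + (a * b * c - a * (b * c)) * a)) = -(a * a * (b * c) - a * (a * (b * c))) + ((a * a * b - a * (a * b)) * c) + ((a * c * (a * b) - a * (c * (a * b))) + (a * (a * b) * c - a * ((a * b) * c))) - (((b * a * c - b * (a * c)) + (a * b * c - a * (b * c))) * a) - ((c * a * (a * b) - c * (a * (a * b))) + (a * c * (a * b) - a * (c * (a * b)))) + (((b * c * a - b * (c * a)) + (b * a * c - b * (a * c))) * a) - (((c * a) * b * a - (c * a) * (b * a)) + ((c * a) * a * b - (c * a) * (a * b))) + ((b * (c * a) * a - b * ((c * a) * a)) + ((c * a) * b * a - (c * a) * (b * a))) + (c * (a * a * b -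 a * (a * b))) - ((b * c) * a * a - (b * c) * (a * a)) + ((c * a * a - c * (a * a)) * b) + ((c * b * (a * a) - c * (b * (a * a))) + (c * (a * a) * b - c * ((a * a) * b))) - ((c * b * (a * a) - c * (b * (a * a))) + (b * c * (a * a) - b * (c * (a * a)))) + (b * (c * a * a - c * (a * a))) := by
      simp only [mul_add, add_mul, mul_sub, sub_mul]
      abel
    rw [key, hLz a (b * c), hLz a b, hRR a c (a * b), hLL b a c, hLL c a (a * b), hRR b c a, hRR (c * a) b a, hLL b (c * a) a, hRz (b * c) a, hRz c a, hRR c b (a * a), hLL c b (a * a)]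
    simp
  have hP1L : ∀ a b d c : A, ((((a * b) * d * c - (a * b) * (d * c)) + ((a * d) * b * c - (a * d) * (b * c))) - (d * (a * b * c - a * (b * c)) + b * (a * d * c - a * (d * c)))) = 0 := by
    intro a b d c
    have key : ((((a * b) * d * c - (a * b) * (d * c)) + ((a * d) * b * c - (a * d) * (b * c))) - (d * (a * b * c - a * (b * c)) + b * (a * d * c - a * (d * c)))) = (((a * (b + d)) * (b + d) * c - (a * (b + d)) * ((b + d) * c)) - (b + d) * (a * (b + d) * c - a * ((b + d) * c))) - (((a * b) * b * c - (a * b) * (b * c)) - b * (a * b * c - a * (b * c))) - (((a * d) * d * c - (a * d) * (d * c)) - d * (a * d * c - a * (d * c))) := by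
      simp only [mul_add, add_mul, mul_sub, sub_mul]
      abel
    rw [key, hP1 a (b + d) c, hP1 a b c, hP1 a d c]
    simp
  intro x y z
  rw [hcirc, hbr, hassoc]
  have key : (x * y - y * x) * (x * y * z - x * (y * z)) + (x * y * z - x * (y * z)) * (x * y - y * x) = -((y * x * ((x * y) * z) - y * (x * ((x * y) * z))) + (y * ((x * y) * z) * x - y * (((x * y) * z) * x))) + ((y * ((x * y) * z) * x - y * (((x * y) * z) * x)) + (((x * y) * z) * y * x - ((x * y) * z) * (y * x))) + (((x * y) * z * (x * y) - (x * y) * (z * (x * y))) + ((x * y) * (x * y) * z - (x * y) * ((x * y) * z))) - ((((x * y) * (x * y) * z - (x * y) * ((x * y) * z)) + ((x * (x * y)) * y * z - (x * (x * y)) * (y * z))) - ((x * y) * (x * y * z - x * (y * z)) + y * (x * (x * y) * z - x * ((x * y) * z)))) - (((x * x * y - x * (x * y)) * y) * z) + (y * ((x * x * y - x * (x * y)) * z)) + ((((x * x) * y) * y * z - ((x * x) * y) * (y * z)) - y * ((x * x) * y * z - (x * x) * (y * z))) - (y * (x * x * (y * z) - x * (x * (y * z)))) + ((y * x * (x * (y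 * z)) - y * (x * (x * (y * z)))) + (y * (x * (y * z)) * x - y * ((x * (y * z)) * x))) - ((y * (x * (y * z)) * x - y * ((x * (y * z)) * x)) + ((x * (y * z)) * y * x - (x * (y * z)) * (y * x))) - ((x * (y * z) * (x * y) - x * ((y * z) * (x * y))) + (x * (x * y) * (y * z) - x * ((x * y) * (y * z)))) + (((x * y * (y * z) - x * (y * (y * z))) - (x * y * z - x * (y * z)) * y) * x) + (((x * x) * y * (y * z) - (x * x) * (y * (y * z))) - (x * (x * y * (y * z) - x * (y * (y * z))) + (x * y * (y * z) - x * (y * (y * z))) * x)) + (x * x * (y * (y * z)) - x * (x * (y * (y * z)))) + ((x * y * (z * (x * y)) - x * (y * (z * (x * y)))) + (x * (z * (x * y)) * y - x * ((z * (x * y)) * y))) - (x * ((z * y * (x * y) - z * (y * (x * y))) + (y * z * (x * y) - y * (z * (x * y))))) + (x * ((z * y * (x * y) - z * (y * (x * y))) + (z * (x * y) * y - z * ((x * y) * y)))) - ((((z * x) * x * y - (z * x) * (x * y)) - x * (z * x * y - z * (x * y))) * y) + (((x * (z * x) * y - x * ((z * x) * y)) + ((z * x) * x * y - (z * x) * (x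 * y))) * y) + (x * (z * (x * y * y - x * (y * y)))) + (((z * x) * x * (y * y) - (z * x) * (x * (y * y))) - x * (z * x * (y * y) - z * (x * (y * y)))) - ((x * (z * x) * (y * y) - x * ((z * x) * (y * y))) + ((z * x) * x * (y * y) - (z * x) * (x * (y * y)))) - ((x * (z * x)) * y * y - (x * (z * x)) * (y * y)) := by
    simp only [mul_add, add_mul, mul_sub, sub_mul]
    abel
  rw [key, hRR y x ((x * y) * z), hLL y ((x * y) * z) x, hRR (x * y) z (x * y), hP1L x y (x * y) z, hLz x y, hP1 (x * x) y z, hLz x (y * z), hRR y x (x * (y * z)), hLL y (x * (y * z)) x, hRR x (y * z) (x * y), hP3 x y z, hLA x y (y * z), hLz x (y * (y * z)), hRR x y (z * (x * y)), hLL z y (x * y), hRR z y (x * y), hP1 z x y, hLL x (z * x) y, hRz x y, hP1 z x (y * y), hLL x (z * x) (y * y), hRz (x * (z * x)) y]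
  simp
end

section
/- If A is an alternative algebra over a field of characteristic not 2 or 3, then the commutator bracket [a,b] = ab - ba satisfies the Malcev identity [J(a,b,c),a] = J(a,b,[a,c]) for all a, b, c in A, where J(a,b,c) = [[a,b],c] + [[b,c],a] + [[c,a],b]. -/
/-- If `A` is an alternative algebra over a field of characteristic not 2 or 3,
then the commutator bracket satisfies the Malcev identity. -/
theorem alternative_commutator_malcev (F : Type*) [Field F]
    (h2 : (2 : F) ≠ 0) (h3 : (3 : F) ≠ 0)
    (A : Type*) [NonUnitalNonAssocRing A] [Module F A]
    [SMulCommClass F A A] [IsScalarTower F A A]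
    (hleft : ∀ a b : A, (a * a) * b - a * (a * b) = 0)
    (hright : ∀ a b : A, (b * a) * a - b * (a * a) = 0)
    (br : A → A → A) (hbr : ∀ x y : A, br x y = x * y - y * x)
    (J : A → A → A → A)
    (hJ : ∀ x y z : A, J x y z = br (br x y) z + br (br y z) x + br (br z x) y) :
    ∀ a b c : A, br (J a b c) a = J a b (br a c) := by
  have A1 : ∀ x y z : A, (x * y) * z - x * (y * z) + ((y * x) * z - y * (x * z)) = 0 := by
    intro x y z
    have h := hleft (x + y) z
    have hx := hleft x z
    have hy := hleft y z
    have e : (x * y) * z - x * (y * z) + ((y * x) * z - y * (x * z))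
        = (((x + y) * (x + y)) * z - (x + y) * ((x + y) * z))
          - ((x * x) * z - x * (x * z)) - ((y * y) * z - y * (y * z)) := by
      simp only [add_mul, mul_add]; abel
    rw [e, h, hx, hy]; abel
  have A2 : ∀ x y z : A, (x * y) * z - x * (y * z) + ((x * z) * y - x * (z * y)) = 0 := by
    intro x y z
    have h := hright (y + z) x
    have hy := hright y x
    have hz := hright z x
    have e : (x * y) * z - x * (y * z) + ((x * z) * y - x * (z * y))
        = ((x * (y + z)) * (y + z) - x * ((y + z) * (y + z)))
          - ((x * y) * y - x * (y * y)) - ((x * z) * z - x * (z * z)) := by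
      simp only [add_mul, mul_add]; abel
    rw [e, h, hy, hz]; abel
  have LA1 : ∀ w x y z : A,
      w * ((x * y) * z) - w * (x * (y * z)) + (w * ((y * x) * z) - w * (y * (x * z))) = 0 := by
    intro w x y z
    have h : w * ((x * y) * z - x * (y * z) + ((y * x) * z - y * (x * z))) = 0 := by
      rw [A1, mul_zero]
    simpa only [mul_add, mul_sub] using h
  have RA1 : ∀ w x y z : A,
      ((x * y) * z) * w - (x * (y * z)) * w + (((y * x) * z) * w - (y * (x * z)) * w) = 0 := by
    intro w x y z
    have h : ((x * y) * z - x * (y * z) + ((y * x) * z - y * (x * z))) * w = 0 := by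
      rw [A1, zero_mul]
    simpa only [add_mul, sub_mul] using h
  have LA2 : ∀ w x y z : A,
      w * ((x * y) * z) - w * (x * (y * z)) + (w * ((x * z) * y) - w * (x * (z * y))) = 0 := by
    intro w x y z
    have h : w * ((x * y) * z - x * (y * z) + ((x * z) * y - x * (z * y))) = 0 := by
      rw [A2, mul_zero]
    simpa only [mul_add, mul_sub] using h
  have RA2 : ∀ w x y z : A,
      ((x * y) * z) * w - (x * (y * z)) * w + (((x * z) * y) * w - (x * (z * y)) * w) = 0 := by
    intro w x y z
    have h : ((x * y) * z - x * (y * z) + ((x * z) * y - x * (z * y))) * w = 0 := by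
      rw [A2, zero_mul]
    simpa only [add_mul, sub_mul] using h
  intro a b c
  have key : (1 : ℤ) • (a * (a * (b * c))) + (-1 : ℤ) • (a * (a * (c * b))) + (1 : ℤ) • (a * (c * (a * b))) + (-1 : ℤ) • (a * (c * (b * a))) + (-1 : ℤ) • (a * ((a * b) * c)) + (1 : ℤ) • (a * ((b * a) * c)) + (-1 : ℤ) • (a * ((b * c) * a)) + (1 : ℤ) • (a * ((c * b) * a)) + (-1 : ℤ) • (b * (a * (a * c))) + (1 : ℤ) • (b * (a * (c * a))) + (1 : ℤ) • (b * ((a * c) * a)) + (-1 : ℤ) • (b * ((c * a) * a)) + (-1 : ℤ) • ((a * b) * (a * c)) + (1 : ℤ) • ((a * b) * (c * a)) + (1 : ℤ) • ((a * c) * (a * b)) + (-1 : ℤ) • ((a * c) * (b * a)) + (1 : ℤ) • ((a * (a * c)) * b) + (-1 : ℤ) • ((a * (b * c)) * a) + (-1 : ℤ) • ((a * (c * a)) * b) + (1 : ℤ) • ((a * (c * b)) * a) + (1 : ℤ) • ((b * a) * (a * c)) + (-1 : ℤ) • ((b * a) * (c * a)) + (-1 : ℤ) • ((c * a) * (a *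 b)) + (1 : ℤ) • ((c * a) * (b * a)) + (-1 : ℤ) • ((c * (a * b)) * a) + (1 : ℤ) • ((c * (b * a)) * a) + (1 : ℤ) • (((a * b) * c) * a) + (-1 : ℤ) • (((a * c) * a) * b) + (-1 : ℤ) • (((b * a) * c) * a) + (1 : ℤ) • (((b * c) * a) * a) + (1 : ℤ) • (((c * a) * a) * b) + (-1 : ℤ) • (((c * b) * a) * a) = (0 : A) := by
    have hcert : (2 : ℤ) • ((1 : ℤ) • (a * (a * (b * c))) + (-1 : ℤ) • (a * (a * (c * b))) + (1 : ℤ) • (a * (c * (a * b))) + (-1 : ℤ) • (a * (c * (b * a))) + (-1 : ℤ) • (a * ((a * b) * c)) + (1 : ℤ) • (a * ((b * a) * c)) + (-1 : ℤ) • (a * ((b * c) * a)) + (1 : ℤ) • (a * ((c * b) * a)) + (-1 : ℤ) • (b * (a * (a * c))) + (1 : ℤ) • (b * (a * (c * a))) + (1 : ℤ) • (b * ((a * c) * a)) + (-1 : ℤ) • (b * ((c * a) * a)) + (-1 : ℤ) • ((a * b) * (a * c)) + (1 : ℤ) • ((a * b) * (c * a)) + (1 : ℤ) • ((a * c) * (a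 * b)) + (-1 : ℤ) • ((a * c) * (b * a)) + (1 : ℤ) • ((a * (a * c)) * b) + (-1 : ℤ) • ((a * (b * c)) * a) + (-1 : ℤ) • ((a * (c * a)) * b) + (1 : ℤ) • ((a * (c * b)) * a) + (1 : ℤ) • ((b * a) * (a * c)) + (-1 : ℤ) • ((b * a) * (c * a)) + (-1 : ℤ) • ((c * a) * (a * b)) + (1 : ℤ) • ((c * a) * (b * a)) + (-1 : ℤ) • ((c * (a * b)) * a) + (1 : ℤ) • ((c * (b * a)) * a) + (1 : ℤ) • (((a * b) * c) * a) + (-1 : ℤ) • (((a * c) * a) * b) + (-1 : ℤ) • (((b * a) * c) * a) + (1 : ℤ) • (((b * c) * a) * a) + (1 : ℤ) • (((c * a) * a) * b) + (-1 : ℤ) • (((c * b) * a) * a))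
        = (-4 : ℤ) • ((a * a) * (b * c) - a * (a * (b * c)) + ((a * a) * (b * c) - a * (a * (b * c)))) + (1 : ℤ) • ((a * a) * (c * b) - a * (a * (c * b)) + ((a * a) * (c * b) - a * (a * (c * b)))) + (-10 : ℤ) • ((a * b) * (a * c) - a * (b * (a * c)) + ((b * a) * (a * c) - b * (a * (a * c)))) + (4 : ℤ) • ((a * b) * (a * c) - a * (b * (a * c)) + ((a * (a * c)) * b - a * ((a * c) * b))) + (-12 : ℤ) • ((a * b) * (c * a) - a * (b * (c * a)) + ((b * a) * (c * a) - b * (a * (c * a)))) + (12 : ℤ) • ((a * b) * (c * a) - a * (b * (c * a)) + ((a * (c * a)) * b - a * ((c * a) * b))) + (-14 : ℤ) • ((a * c) * (a * b) - a * (c * (a * b)) + ((c * a) * (a * b) - c * (a * (a * b)))) + (12 : ℤ) • ((a * c) * (a * b) - a * (c * (a * b)) + ((a * (a * b)) * c - a * ((a * b) * c))) + (-10 : ℤ) • ((a * c) * (b * a) - a * (c * (b * a)) + ((c * a) * (b * a) - c * (a * (b * a)))) + (12 : ℤ) • ((a * c) * (b * a) - a * (c * (b * a)) + ((a * (b * a))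 * c - a * ((b * a) * c))) + (-4 : ℤ) • ((a * (a * b)) * c - a * ((a * b) * c) + (((a * b) * a) * c - (a * b) * (a * c))) + (-4 : ℤ) • ((a * (a * c)) * b - a * ((a * c) * b) + (((a * c) * a) * b - (a * c) * (a * b))) + (-8 : ℤ) • ((a * (b * a)) * c - a * ((b * a) * c) + (((b * a) * a) * c - (b * a) * (a * c))) + (2 : ℤ) • ((a * (b * c)) * a - a * ((b * c) * a) + (((b * c) * a) * a - (b * c) * (a * a))) + (-12 : ℤ) • ((a * (c * a)) * b - a * ((c * a) * b) + (((c * a) * a) * b - (c * a) * (a * b))) + (-2 : ℤ) • ((a * (c * b)) * a - a * ((c * b) * a) + (((c * b) * a) * a - (c * b) * (a * a))) + (4 : ℤ) • ((b * a) * (a * c) - b * (a * (a * c)) + ((b * (a * c)) * a - b * ((a * c) * a))) + (-14 : ℤ) • ((b * c) * (a * a) - b * (c * (a * a)) + ((c * b) * (a * a) - c * (b * (a * a)))) + (16 : ℤ) • ((b * c) * (a * a) - b * (c * (a * a)) + ((b * (a * a)) * c - b * ((a * a) * c))) + (-8 : ℤ) • ((b * (a * a)) * c - b * ((a * a) * c)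 + (((a * a) * b) * c - (a * a) * (b * c))) + (4 : ℤ) • ((b * (a * c)) * a - b * ((a * c) * a) + (((a * c) * b) * a - (a * c) * (b * a))) + (12 : ℤ) • ((c * a) * (b * a) - c * (a * (b * a)) + ((c * (b * a)) * a - c * ((b * a) * a))) + (12 : ℤ) • ((c * b) * (a * a) - c * (b * (a * a)) + ((c * (a * a)) * b - c * ((a * a) * b))) + (2 : ℤ) • ((c * (a * a)) * b - c * ((a * a) * b) + (((a * a) * c) * b - (a * a) * (c * b))) + (-2 : ℤ) • ((c * (a * b)) * a - c * ((a * b) * a) + (((a * b) * c) * a - (a * b) * (c * a))) + (-10 : ℤ) • ((c * (b * a)) * a - c * ((b * a) * a) + (((b * a) * c) * a - (b * a) * (c * a))) + (9 : ℤ) • (c * ((a * a) * b) - c * (a * (a * b)) + (c * ((a * a) * b) - c * (a * (a * b)))) + (6 : ℤ) • (((a * a) * b) * c - (a * (a * b)) * c + (((a * a) * b) * c - (a * (a * b)) * c)) + (-4 : ℤ) • (c * ((a * a) * b) - c * (a * (a * b)) + (c * ((a * b) * a) - c * (a * (b * a)))) + (-4 : ℤ) • (((a * a) * b) * c - (a *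 (a * b)) * c + (((a * b) * a) * c - (a * (b * a)) * c)) + (-2 : ℤ) • (b * ((a * a) * c) - b * (a * (a * c)) + (b * ((a * a) * c) - b * (a * (a * c)))) + (5 : ℤ) • (((a * a) * c) * b - (a * (a * c)) * b + (((a * a) * c) * b - (a * (a * c)) * b)) + (12 : ℤ) • (b * ((a * a) * c) - b * (a * (a * c)) + (b * ((a * c) * a) - b * (a * (c * a)))) + (-12 : ℤ) • (((a * a) * c) * b - (a * (a * c)) * b + (((a * c) * a) * b - (a * (c * a)) * b)) + (2 : ℤ) • (c * ((a * b) * a) - c * (a * (b * a)) + (c * ((b * a) * a) - c * (b * (a * a)))) + (8 : ℤ) • (((a * b) * a) * c - (a * (b * a)) * c + (((b * a) * a) * c - (b * (a * a)) * c)) + (6 : ℤ) • (a * ((a * b) * c) - a * (a * (b * c)) + (a * ((b * a) * c) - a * (b * (a * c)))) + (8 : ℤ) • (((a * b) * c) * a - (a * (b * c)) * a + (((b * a) * c) * a - (b * (a * c)) * a)) + (-4 : ℤ) • (((a * b) * c) * a - (a * (b * c)) * a + (((a * c) * b) * a - (a * (c * b)) * a)) + (-2 : ℤ) • (b * ((a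 * c) * a) - b * (a * (c * a)) + (b * ((c * a) * a) - b * (c * (a * a)))) + (14 : ℤ) • (((a * c) * a) * b - (a * (c * a)) * b + (((c * a) * a) * b - (c * (a * a)) * b)) := by
      abel
    have hz : (2 : ℤ) • ((1 : ℤ) • (a * (a * (b * c))) + (-1 : ℤ) • (a * (a * (c * b))) + (1 : ℤ) • (a * (c * (a * b))) + (-1 : ℤ) • (a * (c * (b * a))) + (-1 : ℤ) • (a * ((a * b) * c)) + (1 : ℤ) • (a * ((b * a) * c)) + (-1 : ℤ) • (a * ((b * c) * a)) + (1 : ℤ) • (a * ((c * b) * a)) + (-1 : ℤ) • (b * (a * (a * c))) + (1 : ℤ) • (b * (a * (c * a))) + (1 : ℤ) • (b * ((a * c) * a)) + (-1 : ℤ) • (b * ((c * a) * a)) + (-1 : ℤ) • ((a * b) * (a * c)) + (1 : ℤ) • ((a * b) * (c * a)) + (1 : ℤ) • ((a * c) * (a * b)) + (-1 : ℤ) • ((a * c) * (b * a)) + (1 : ℤ) • ((a * (a * c)) * b) + (-1 : ℤ) • ((a * (b * c)) * a) + (-1 : ℤ) • ((a * (c * a)) * b) + (1 : ℤ) • ((a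 * (c * b)) * a) + (1 : ℤ) • ((b * a) * (a * c)) + (-1 : ℤ) • ((b * a) * (c * a)) + (-1 : ℤ) • ((c * a) * (a * b)) + (1 : ℤ) • ((c * a) * (b * a)) + (-1 : ℤ) • ((c * (a * b)) * a) + (1 : ℤ) • ((c * (b * a)) * a) + (1 : ℤ) • (((a * b) * c) * a) + (-1 : ℤ) • (((a * c) * a) * b) + (-1 : ℤ) • (((b * a) * c) * a) + (1 : ℤ) • (((b * c) * a) * a) + (1 : ℤ) • (((c * a) * a) * b) + (-1 : ℤ) • (((c * b) * a) * a)) = 0 := by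
      rw [hcert]
      simp only [A1, A2, LA1, RA1, LA2, RA2, smul_zero, add_zero, zero_add]
    have hz' : ((2 : ℤ) : F) • ((1 : ℤ) • (a * (a * (b * c))) + (-1 : ℤ) • (a * (a * (c * b))) + (1 : ℤ) • (a * (c * (a * b))) + (-1 : ℤ) • (a * (c * (b * a))) + (-1 : ℤ) • (a * ((a * b) * c)) + (1 : ℤ) • (a * ((b * a) * c)) + (-1 : ℤ) • (a * ((b * c) * a)) + (1 : ℤ) • (a * ((c * b) * a)) + (-1 : ℤ) • (b * (a * (a * c))) + (1 : ℤ) • (b * (a * (c * a))) + (1 : ℤ) • (b * ((a * c) * a)) + (-1 : ℤ) • (b * ((c * a) * a)) + (-1 : ℤ) • ((a * b) * (a * c)) + (1 : ℤ) • ((a * b) * (c * a)) + (1 : ℤ) • ((a * c) * (a * b)) + (-1 : ℤ) • ((a * c) * (b * a)) + (1 : ℤ) • ((a * (a * c)) * b) + (-1 : ℤ) • ((a * (b * c)) * a) + (-1 : ℤ) • ((a * (c * a)) * b) + (1 : ℤ) • ((a * (c * b)) * a) + (1 : ℤ) • ((b * a) * (a * c)) + (-1 : ℤ) • ((b * a)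 * (c * a)) + (-1 : ℤ) • ((c * a) * (a * b)) + (1 : ℤ) • ((c * a) * (b * a)) + (-1 : ℤ) • ((c * (a * b)) * a) + (1 : ℤ) • ((c * (b * a)) * a) + (1 : ℤ) • (((a * b) * c) * a) + (-1 : ℤ) • (((a * c) * a) * b) + (-1 : ℤ) • (((b * a) * c) * a) + (1 : ℤ) • (((b * c) * a) * a) + (1 : ℤ) • (((c * a) * a) * b) + (-1 : ℤ) • (((c * b) * a) * a)) = 0 := by
      rw [Int.cast_smul_eq_zsmul]; exact hz
    have h2F : ((2 : ℤ) : F) ≠ 0 := by exact_mod_cast h2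
    exact (smul_eq_zero.mp hz').resolve_left h2F
  simp only [hJ, hbr, mul_sub, sub_mul, mul_add, add_mul]
  rw [← sub_eq_zero, ← key]
  abel
end

section
/- Let A be a nonassociative algebra and let a, b be elements of the generalized alternative nucleus N_alt(A). Then the operators satisfy [L_a, L_b] + [L_a, R_b] + [R_a, R_b] = ad_{[a,b]} - 3 [L_a, R_b], where L_a(x) = ax, R_a(x) = xa, ad_a(x) = [a,x] = ax - xa, and the outer brackets are commutators of linear operators. -/
/-- For `a, b` in the generalized alternative nucleus of a nonassociative algebra,
`[L_a,L_b] + [L_a,R_b] + [R_a,R_b] = ad_{[a,b]} - 3[L_a,R_b]` as operators. -/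
theorem nalt_operator_identity (F : Type*) [Field F] (A : Type*)
    [NonUnitalNonAssocRing A] [Module F A] [SMulCommClass F A A] [IsScalarTower F A A]
    (assoc : A → A → A → A)
    (hassoc : ∀ x y z : A, assoc x y z = x * y * z - x * (y * z))
    (a b : A)
    (ha : ∀ x y : A, assoc a x y = -assoc x a y ∧ assoc a x y = assoc x y a)
    (hb : ∀ x y : A, assoc b x y = -assoc x b y ∧ assoc b x y = assoc x y b) :
    ∀ x : A,
      (a * (b * x) - b * (a * x)) + (a * (x * b) - (a * x) * b)
        + ((x * b) * a - (x * a) * b)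
      = ((a * b - b * a) * x - x * (a * b - b * a))
        - (3 : ℤ) • (a * (x * b) - (a * x) * b) := by
  intro x
  have h1 := (ha x b).1
  have h2 := (ha x b).2
  have h3 := (ha b x).2
  have h4 := (hb x a).1
  have h5 := (hb a x).1
  rw [hassoc, hassoc] at h1 h2 h3 h4 h5
  simp only [mul_sub, sub_mul]
  linear_combination (norm := abel) -h1 - h2 - h2 - h2 - h3 - h3 - h4 - h4 + h5
end

section
/- Let A be a nonassociative algebra over a field of characteristic not 2 or 3, and let a, b ∈ N_alt(A). Then the operator D_{a,b} = [L_a, L_b] + [L_a, R_b] + [R_a, R_b] is a derivation of A: D_{a,b}(xy) = D_{a,b}(x) y + x D_{a,b}(y) for all x, y ∈ A. -/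
/-- For `a, b` in the generalized alternative nucleus of a nonassociative algebra
over a field of characteristic not 2 or 3, the operator
`D_{a,b} = [L_a,L_b] + [L_a,R_b] + [R_a,R_b]` is a derivation. -/
theorem nalt_Dab_derivation (F : Type*) [Field F]
    (h2 : (2 : F) ≠ 0) (h3 : (3 : F) ≠ 0)
    (A : Type*) [NonUnitalNonAssocRing A] [Module F A]
    [SMulCommClass F A A] [IsScalarTower F A A]
    (assoc : A → A → A → A)
    (hassoc : ∀ x y z : A, assoc x y z = x * y * z - x * (y * z))
    (a b : A)
    (ha : ∀ x y : A, assoc a x y = -assoc x a y ∧ assoc a x y = assoc x y a)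
    (hb : ∀ x y : A, assoc b x y = -assoc x b y ∧ assoc b x y = assoc x y b)
    (D : A → A)
    (hD : ∀ x : A, D x = (a * (b * x) - b * (a * x)) + (a * (x * b) - (a * x) * b)
        + ((x * b) * a - (x * a) * b)) :
    ∀ x y : A, D (x * y) = D x * y + x * D y := by
  intro x y
  have z0 : (assoc a (b * x) y - assoc (b * x) y a) = 0 := by rw [(ha (b * x) y).2]; abel
  have z1 : (assoc a x (b * y) + assoc x a (b * y)) = 0 := by rw [(ha x (b * y)).1]; abel
  have z2 : (assoc a (x * b) y + assoc (x * b) a y) = 0 := by rw [(ha (x * b) y).1]; abel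
  have z3 : (assoc a (x * y) b - assoc (x * y) b a) = 0 := by rw [(ha (x * y) b).2]; abel
  have z4 : (assoc a x (y * b) + assoc x a (y * b)) = 0 := by rw [(ha x (y * b)).1]; abel
  have z5 : (assoc a x (y * b) - assoc x (y * b) a) = 0 := by rw [(ha x (y * b)).2]; abel
  have z6 : (assoc a x y + assoc x a y) = 0 := by rw [(ha x y).1]; abel
  have z7 : (assoc a x y - assoc x y a) = 0 := by rw [(ha x y).2]; abel
  have z8 : (assoc b (a * x) y + assoc (a * x) b y) = 0 := by rw [(hb (a * x) y).1]; abel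
  have z9 : (assoc b x (a * y) + assoc x b (a * y)) = 0 := by rw [(hb x (a * y)).1]; abel
  have z10 : (assoc b x (a * y) - assoc x (a * y) b) = 0 := by rw [(hb x (a * y)).2]; abel
  have z11 : (assoc b (x * a) y + assoc (x * a) b y) = 0 := by rw [(hb (x * a) y).1]; abel
  have z12 : (assoc b (x * a) y - assoc (x * a) y b) = 0 := by rw [(hb (x * a) y).2]; abel
  have z13 : (assoc b (x * y) a + assoc (x * y) b a) = 0 := by rw [(hb (x * y) a).1]; abel
  have z14 : (assoc b x (y * a) - assoc x (y * a) b) = 0 := by rw [(hb x (y * a)).2]; abel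
  have z15 : (assoc b x y + assoc x b y) = 0 := by rw [(hb x y).1]; abel
  have z16 : (assoc b x y - assoc x y b) = 0 := by rw [(hb x y).2]; abel
  have key : D (x * y) - (D x * y + x * D y) =
      - (assoc a (b * x) y - assoc (b * x) y a) + (assoc a x (b * y) + assoc x a (b * y)) - (assoc a (x * b) y + assoc (x * b) a y) - (assoc a (x * y) b - assoc (x * y) b a) + (assoc a x (y * b) + assoc x a (y * b)) - (assoc a x (y * b) - assoc x (y * b) a) - (assoc a x y + assoc x a y) * b + b * (assoc a x y - assoc x y a) + (assoc a x y - assoc x y a) * b + (assoc b (a * x) y + assoc (a * x) b y) - (assoc b x (a * y) + assoc x b (a * y)) + (assoc b x (a * y) - assoc x (a * y) b) + (assoc b (x * a) y + assoc (x * a) b y) - (assoc b (x * a) y - assoc (x * a) y b) - (assoc b (x * y) a + assoc (x * y) b a) + (assoc b x (y * a) - assoc x (y * a) b) - a * (assoc b x y + assoc x b y) - (assoc b x y - assoc x y b) * a := by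
    rw [hD, hD, hD]
    simp only [hassoc, mul_add, mul_sub, add_mul, sub_mul]
    abel
  have main : D (x * y) - (D x * y + x * D y) = 0 := by
    rw [key, z0, z1, z2, z3, z4, z5, z6, z7, z8, z9, z10, z11, z12, z13, z14, z15, z16]
    simp
  exact sub_eq_zero.mp main
end

section
/- Let A be a nonassociative algebra over a field of characteristic not 2 or 3, let a, b ∈ N_alt(A), and x ∈ A. Then (a,b,x) = (1/6)[[x,a],b] - (1/6)[[x,b],a] - (1/6)[x,[a,b]], where [u,v] = uv - vu and (u,v,w) = (uv)w - u(vw). -/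
/-- For `a, b` in the generalized alternative nucleus and any `x`,
`(a,b,x) = (1/6)[[x,a],b] - (1/6)[[x,b],a] - (1/6)[x,[a,b]]`. -/
theorem nalt_associator_formula (F : Type*) [Field F]
    (h2 : (2 : F) ≠ 0) (h3 : (3 : F) ≠ 0)
    (A : Type*) [NonUnitalNonAssocRing A] [Module F A]
    [SMulCommClass F A A] [IsScalarTower F A A]
    (assoc : A → A → A → A)
    (hassoc : ∀ x y z : A, assoc x y z = x * y * z - x * (y * z))
    (br : A → A → A) (hbr : ∀ x y : A, br x y = x * y - y * x)
    (a b : A)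
    (ha : ∀ x y : A, assoc a x y = -assoc x a y ∧ assoc a x y = assoc x y a)
    (hb : ∀ x y : A, assoc b x y = -assoc x b y ∧ assoc b x y = assoc x y b) :
    ∀ x : A, assoc a b x
      = (6 : F)⁻¹ • br (br x a) b - (6 : F)⁻¹ • br (br x b) a
        - (6 : F)⁻¹ • br x (br a b) := by
  intro x
  simp only [hassoc] at ha hb
  simp only [hassoc, hbr]
  have h6 : (6 : F) ≠ 0 := by
    have h23 : (6 : F) = 2 * 3 := by norm_num
    rw [h23]; exact mul_ne_zero h2 h3
  have f5 : b*a*x - b*(a*x) = -(a*b*x - a*(b*x)) := by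
    have h := (ha b x).1
    rw [h]; exact (neg_neg _).symm
  have f4 : b*x*a - b*(x*a) = a*b*x - a*(b*x) := ((ha b x).2).symm
  have f2 : a*x*b - a*(x*b) = -(a*b*x - a*(b*x)) := by
    rw [← (hb a x).2]; exact f5
  have f1 : x*a*b - x*(a*b) = a*b*x - a*(b*x) := by
    have h := (ha x b).1
    rw [f2] at h
    exact (neg_injective h).symm
  have f3 : x*b*a - x*(b*a) = -(a*b*x - a*(b*x)) := by
    have h := (hb x a).1
    rw [f4] at h
    rw [h]; exact (neg_neg _).symm
  have comb : ((x*a - a*x)*b - b*(x*a - a*x)) - ((x*b - b*x)*a - a*(x*b - b*x))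
      - (x*(a*b - b*a) - (a*b - b*a)*x) - (6:ℤ) • (a*b*x - a*(b*x))
      = ((x*a*b - x*(a*b)) - (a*b*x - a*(b*x)))
        - ((a*x*b - a*(x*b)) - -(a*b*x - a*(b*x)))
        - ((x*b*a - x*(b*a)) - -(a*b*x - a*(b*x)))
        + ((b*x*a - b*(x*a)) - (a*b*x - a*(b*x)))
        - ((b*a*x - b*(a*x)) - -(a*b*x - a*(b*x))) := by
    simp only [mul_sub, sub_mul]
    abel
  rw [f1, f2, f3, f4, f5] at comb
  simp only [sub_self, sub_zero, zero_sub, add_zero, neg_zero] at comb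
  have key := sub_eq_zero.mp comb
  rw [← smul_sub, ← smul_sub, eq_comm, inv_smul_eq_iff₀ h6, key]
  rw [show (6:F) = ((6:ℤ):F) by norm_num, Int.cast_smul_eq_zsmul]
end

section
/- The generalized alternative nucleus N_alt(A) of any nonassociative algebra A is closed under the commutator: if a, b ∈ N_alt(A) then [a,b] = ab - ba ∈ N_alt(A). -/
/-- The generalized alternative nucleus is closed under the commutator. -/
theorem nalt_closed_under_commutator (F : Type*) [Field F]
    (h2 : (2 : F) ≠ 0) (h3 : (3 : F) ≠ 0)
    (A : Type*) [NonUnitalNonAssocRing A] [Module F A]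
    [SMulCommClass F A A] [IsScalarTower F A A]
    (assoc : A → A → A → A)
    (hassoc : ∀ x y z : A, assoc x y z = x * y * z - x * (y * z))
    (a b : A)
    (ha : ∀ x y : A, assoc a x y = -assoc x a y ∧ assoc a x y = assoc x y a)
    (hb : ∀ x y : A, assoc b x y = -assoc x b y ∧ assoc b x y = assoc x y b) :
    ∀ x y : A, assoc (a * b - b * a) x y = -assoc x (a * b - b * a) y ∧
      assoc (a * b - b * a) x y = assoc x y (a * b - b * a) := by
  intro x y
  have z10 : assoc a b (x * y) + assoc b a (x * y) = 0 := by rw [(ha b (x * y)).1]; exact neg_add_cancel _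
  have z11 : assoc a b (x * y) - assoc b (x * y) a = 0 := by rw [(ha b (x * y)).2]; exact sub_self _
  have z12 : assoc a x (b * y) + assoc x a (b * y) = 0 := by rw [(ha x (b * y)).1]; exact neg_add_cancel _
  have z13 : assoc a x (b * y) - assoc x (b * y) a = 0 := by rw [(ha x (b * y)).2]; exact sub_self _
  have z14 : assoc a (b * x) y + assoc (b * x) a y = 0 := by rw [(ha (b * x) y).1]; exact neg_add_cancel _
  have z15 : assoc a (b * x) y - assoc (b * x) y a = 0 := by rw [(ha (b * x) y).2]; exact sub_self _
  have z16 : assoc a (x * b) y + assoc (x * b) a y = 0 := by rw [(ha (x * b) y).1]; exact neg_add_cancel _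
  have z17 : assoc a (x * b) y - assoc (x * b) y a = 0 := by rw [(ha (x * b) y).2]; exact sub_self _
  have z18 : assoc b x (a * y) + assoc x b (a * y) = 0 := by rw [(hb x (a * y)).1]; exact neg_add_cancel _
  have z19 : assoc b x (y * a) + assoc x b (y * a) = 0 := by rw [(hb x (y * a)).1]; exact neg_add_cancel _
  have z110 : assoc b (a * x) y + assoc (a * x) b y = 0 := by rw [(hb (a * x) y).1]; exact neg_add_cancel _
  have z111 : assoc b (x * a) y + assoc (x * a) b y = 0 := by rw [(hb (x * a) y).1]; exact neg_add_cancel _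
  have z112 : assoc a b x + assoc b a x = 0 := by rw [(ha b x).1]; exact neg_add_cancel _
  have z113 : (assoc a b x + assoc b a x) * y = 0 := by rw [z112, zero_mul]
  have z114 : assoc a b x - assoc b x a = 0 := by rw [(ha b x).2]; exact sub_self _
  have z115 : (assoc a b x - assoc b x a) * y = 0 := by rw [z114, zero_mul]
  have z116 : assoc a b y + assoc b a y = 0 := by rw [(ha b y).1]; exact neg_add_cancel _
  have z117 : x * (assoc a b y + assoc b a y) = 0 := by rw [z116, mul_zero]
  have z118 : assoc a b y - assoc b y a = 0 := by rw [(ha b y).2]; exact sub_self _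
  have z119 : x * (assoc a b y - assoc b y a) = 0 := by rw [z118, mul_zero]
  have z120 : assoc a x b + assoc x a b = 0 := by rw [(ha x b).1]; exact neg_add_cancel _
  have z121 : (assoc a x b + assoc x a b) * y = 0 := by rw [z120, zero_mul]
  have z122 : assoc a x b - assoc x b a = 0 := by rw [(ha x b).2]; exact sub_self _
  have z123 : (assoc a x b - assoc x b a) * y = 0 := by rw [z122, zero_mul]
  have z124 : assoc a x y + assoc x a y = 0 := by rw [(ha x y).1]; exact neg_add_cancel _
  have z125 : b * (assoc a x y + assoc x a y) = 0 := by rw [z124, mul_zero]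
  have z126 : assoc a x y - assoc x y a = 0 := by rw [(ha x y).2]; exact sub_self _
  have z127 : b * (assoc a x y - assoc x y a) = 0 := by rw [z126, mul_zero]
  have z128 : assoc b a x - assoc a x b = 0 := by rw [(hb a x).2]; exact sub_self _
  have z129 : (assoc b a x - assoc a x b) * y = 0 := by rw [z128, zero_mul]
  have z130 : assoc b x y + assoc x b y = 0 := by rw [(hb x y).1]; exact neg_add_cancel _
  have z131 : a * (assoc b x y + assoc x b y) = 0 := by rw [z130, mul_zero]
  have z132 : (assoc b x y + assoc x b y) * a = 0 := by rw [z130, zero_mul]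
  have key1 : assoc (a * b - b * a) x y - (-assoc x (a * b - b * a) y) = (1 : ℤ) • (assoc a b (x * y) + assoc b a (x * y)) + (-2 : ℤ) • (assoc a b (x * y) - assoc b (x * y) a) + (1 : ℤ) • (assoc a x (b * y) + assoc x a (b * y)) + (-2 : ℤ) • (assoc a x (b * y) - assoc x (b * y) a) + (-1 : ℤ) • (assoc a (b * x) y + assoc (b * x) a y) + (2 : ℤ) • (assoc a (b * x) y - assoc (b * x) y a) + (-1 : ℤ) • (assoc a (x * b) y + assoc (x * b) a y) + (2 : ℤ) • (assoc a (x * b) y - assoc (x * b) y a) + (-1 : ℤ) • (assoc b x (a * y) + assoc x b (a * y)) + (-2 : ℤ) • (assoc b x (y * a) + assoc x b (y * a)) + (-1 : ℤ) • (assoc b (a * x) y + assoc (a * x) b y) + (1 : ℤ) • (assoc b (x * a) y + assoc (x * a) b y) + (2 : ℤ) • ((assoc a b x + assoc b a x) * y) + (-1 : ℤ) • ((assoc a b x - assoc b x a) * y) + (1 : ℤ) • (x * (assoc a b y + assoc b a y)) + (-2 : ℤ) • (x * (assoc a b y - assoc b y a)) + (-1 : ℤ) • ((assoc a x b + assoc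 x a b) * y) + (-1 : ℤ) • ((assoc a x b - assoc x b a) * y) + (1 : ℤ) • (b * (assoc a x y + assoc x a y)) + (-2 : ℤ) • (b * (assoc a x y - assoc x y a)) + (-3 : ℤ) • ((assoc b a x - assoc a x b) * y) + (1 : ℤ) • (a * (assoc b x y + assoc x b y)) + (2 : ℤ) • ((assoc b x y + assoc x b y) * a) := by
    simp only [hassoc]
    simp only [mul_add, add_mul, mul_sub, sub_mul, mul_neg, neg_mul, smul_add, smul_sub, smul_neg]
    abel
  have fin1 : assoc (a * b - b * a) x y - (-assoc x (a * b - b * a) y) = 0 := by rw [key1]; simp [z10, z11, z12, z13, z14, z15, z16, z17, z18, z19, z110, z111, z112, z113, z114, z115, z116, z117, z118, z119, z120, z121, z122, z123, z124, z125, z126, z127, z128, z129, z130, z131, z132]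
  have z20 : assoc a b (x * y) + assoc b a (x * y) = 0 := by rw [(ha b (x * y)).1]; exact neg_add_cancel _
  have z21 : assoc a x (b * y) - assoc x (b * y) a = 0 := by rw [(ha x (b * y)).2]; exact sub_self _
  have z22 : assoc a x (y * b) + assoc x a (y * b) = 0 := by rw [(ha x (y * b)).1]; exact neg_add_cancel _
  have z23 : assoc a x (y * b) - assoc x (y * b) a = 0 := by rw [(ha x (y * b)).2]; exact sub_self _
  have z24 : assoc a (b * x) y + assoc (b * x) a y = 0 := by rw [(ha (b * x) y).1]; exact neg_add_cancel _
  have z25 : assoc a (x * b) y - assoc (x * b) y a = 0 := by rw [(ha (x * b) y).2]; exact sub_self _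
  have z26 : assoc a (x * y) b + assoc (x * y) a b = 0 := by rw [(ha (x * y) b).1]; exact neg_add_cancel _
  have z27 : assoc a (x * y) b - assoc (x * y) b a = 0 := by rw [(ha (x * y) b).2]; exact sub_self _
  have z28 : assoc b a (x * y) - assoc a (x * y) b = 0 := by rw [(hb a (x * y)).2]; exact sub_self _
  have z29 : assoc b x (a * y) - assoc x (a * y) b = 0 := by rw [(hb x (a * y)).2]; exact sub_self _
  have z210 : assoc b x (y * a) + assoc x b (y * a) = 0 := by rw [(hb x (y * a)).1]; exact neg_add_cancel _
  have z211 : assoc b x (y * a) - assoc x (y * a) b = 0 := by rw [(hb x (y * a)).2]; exact sub_self _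
  have z212 : assoc b (a * x) y + assoc (a * x) b y = 0 := by rw [(hb (a * x) y).1]; exact neg_add_cancel _
  have z213 : assoc b (x * a) y - assoc (x * a) y b = 0 := by rw [(hb (x * a) y).2]; exact sub_self _
  have z214 : assoc a b x - assoc b x a = 0 := by rw [(ha b x).2]; exact sub_self _
  have z215 : (assoc a b x - assoc b x a) * y = 0 := by rw [z214, zero_mul]
  have z216 : assoc a b y + assoc b a y = 0 := by rw [(ha b y).1]; exact neg_add_cancel _
  have z217 : x * (assoc a b y + assoc b a y) = 0 := by rw [z216, mul_zero]
  have z218 : assoc a b y - assoc b y a = 0 := by rw [(ha b y).2]; exact sub_self _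
  have z219 : x * (assoc a b y - assoc b y a) = 0 := by rw [z218, mul_zero]
  have z220 : assoc a x y + assoc x a y = 0 := by rw [(ha x y).1]; exact neg_add_cancel _
  have z221 : b * (assoc a x y + assoc x a y) = 0 := by rw [z220, mul_zero]
  have z222 : (assoc a x y + assoc x a y) * b = 0 := by rw [z220, zero_mul]
  have z223 : assoc a x y - assoc x y a = 0 := by rw [(ha x y).2]; exact sub_self _
  have z224 : (assoc a x y - assoc x y a) * b = 0 := by rw [z223, zero_mul]
  have z225 : assoc a y b + assoc y a b = 0 := by rw [(ha y b).1]; exact neg_add_cancel _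
  have z226 : x * (assoc a y b + assoc y a b) = 0 := by rw [z225, mul_zero]
  have z227 : assoc a y b - assoc y b a = 0 := by rw [(ha y b).2]; exact sub_self _
  have z228 : x * (assoc a y b - assoc y b a) = 0 := by rw [z227, mul_zero]
  have z229 : assoc b a x - assoc a x b = 0 := by rw [(hb a x).2]; exact sub_self _
  have z230 : (assoc b a x - assoc a x b) * y = 0 := by rw [z229, zero_mul]
  have z231 : assoc b a y - assoc a y b = 0 := by rw [(hb a y).2]; exact sub_self _
  have z232 : x * (assoc b a y - assoc a y b) = 0 := by rw [z231, mul_zero]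
  have z233 : assoc b x y + assoc x b y = 0 := by rw [(hb x y).1]; exact neg_add_cancel _
  have z234 : a * (assoc b x y + assoc x b y) = 0 := by rw [z233, mul_zero]
  have z235 : (assoc b x y + assoc x b y) * a = 0 := by rw [z233, zero_mul]
  have z236 : assoc b x y - assoc x y b = 0 := by rw [(hb x y).2]; exact sub_self _
  have z237 : (assoc b x y - assoc x y b) * a = 0 := by rw [z236, zero_mul]
  have key2 : assoc (a * b - b * a) x y - (assoc x y (a * b - b * a)) = (-1 : ℤ) • (assoc a b (x * y) + assoc b a (x * y)) + (-1 : ℤ) • (assoc a x (b * y) - assoc x (b * y) a) + (1 : ℤ) • (assoc a x (y * b) + assoc x a (y * b)) + (-1 : ℤ) • (assoc a x (y * b) - assoc x (y * b) a) + (1 : ℤ) • (assoc a (b * x) y + assoc (b * x) a y) + (1 : ℤ) • (assoc a (x * b) y - assoc (x * b) y a) + (1 : ℤ) • (assoc a (x * y) b + assoc (x * y) a b) + (1 : ℤ) • (assoc a (x * y) b - assoc (x * y) b a) + (2 : ℤ) • (assoc b a (x * y) - assoc a (x * y) b) + (1 : ℤ) • (assoc b x (a * y) - assoc x (a * y) b)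 + (-1 : ℤ) • (assoc b x (y * a) + assoc x b (y * a)) + (1 : ℤ) • (assoc b x (y * a) - assoc x (y * a) b) + (-1 : ℤ) • (assoc b (a * x) y + assoc (a * x) b y) + (-1 : ℤ) • (assoc b (x * a) y - assoc (x * a) y b) + (1 : ℤ) • ((assoc a b x - assoc b x a) * y) + (1 : ℤ) • (x * (assoc a b y + assoc b a y)) + (-1 : ℤ) • (x * (assoc a b y - assoc b y a)) + (-1 : ℤ) • (b * (assoc a x y + assoc x a y)) + (-1 : ℤ) • ((assoc a x y + assoc x a y) * b) + (1 : ℤ) • ((assoc a x y - assoc x y a) * b) + (-1 : ℤ) • (x * (assoc a y b + assoc y a b)) + (-1 : ℤ) • (x * (assoc a y b - assoc y b a)) + (-1 : ℤ) • ((assoc b a x - assoc a x b) * y) + (-1 : ℤ) • (x * (assoc b a y - assoc a y b)) + (1 : ℤ) • (a * (assoc b x y + assoc x b y)) + (1 : ℤ) • ((assoc b x y + assoc x b y) * a) + (-1 : ℤ) • ((assoc b x y - assoc x y b) * a) := by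
    simp only [hassoc]
    simp only [mul_add, add_mul, mul_sub, sub_mul, mul_neg, neg_mul, smul_add, smul_sub, smul_neg]
    abel
  have fin2 : assoc (a * b - b * a) x y - (assoc x y (a * b - b * a)) = 0 := by rw [key2]; simp [z20, z21, z22, z23, z24, z25, z26, z27, z28, z29, z210, z211, z212, z213, z214, z215, z216, z217, z218, z219, z220, z221, z222, z223, z224, z225, z226, z227, z228, z229, z230, z231, z232, z233, z234, z235, z236, z237]
  exact ⟨sub_eq_zero.mp fin1, sub_eq_zero.mp fin2⟩
end

section
/- The 4-dimensional algebra A over a field F with basis {a, b, c, d} and multiplication table a·a = a, b·a = b, c·a = c, a·d = d, b·c = d, c·b = -d, and all other products of basis elements zero, is an alternative algebra: it satisfies (x,x,y) = 0 and (y,x,x) = 0 for all x, y ∈ A. -/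
/-- Multiplication of the 4-dimensional algebra with basis `a, b, c, d`
(coordinates `0, 1, 2, 3`) and table `a·a = a`, `b·a = b`, `c·a = c`,
`a·d = d`, `b·c = d`, `c·b = -d`, all other basis products zero. -/
def fourDimMul {F : Type*} [Field F] (u v : Fin 4 → F) : Fin 4 → F :=
  ![u 0 * v 0, u 1 * v 0, u 2 * v 0, u 0 * v 3 + u 1 * v 2 - u 2 * v 1]

/-- This 4-dimensional algebra is alternative: `(x,x,y) = 0` and `(y,x,x) = 0`. -/
theorem fourDim_algebra_alternative (F : Type*) [Field F] (h2 : (2 : F) ≠ 0) :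
    ∀ x y : Fin 4 → F,
      fourDimMul (fourDimMul x x) y - fourDimMul x (fourDimMul x y) = 0 ∧
      fourDimMul (fourDimMul y x) x - fourDimMul y (fourDimMul x x) = 0 := by
  intro x y
  constructor <;>
  · funext i
    fin_cases i <;> simp [fourDimMul] <;> ring
end

section
/- Every right alternative ring satisfies: the commutator [a,b] = ab - ba and the ternary operation [a,b,c] = ⟨b,c,a⟩ (where ⟨x,y,z⟩ = (x∘y)∘z - x∘(y∘z) is the Jordan associator for x∘y = (1/2)(xy+yx)) satisfy [a,a,c] = 0 and [a,b,c] + [b,c,a] + [c,a,b] = 0 for all a, b, c. -/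
/-- In a right alternative algebra over a field of characteristic ≠ 2, the
ternary operation `[a,b,c] = ⟨b,c,a⟩` (Jordan associator of the symmetrized
product `x∘y = (1/2)(xy+yx)`) satisfies `[a,a,c] = 0` and the cyclic identity
`[a,b,c] + [b,c,a] + [c,a,b] = 0`. -/
theorem rightAlternative_bol_triple (F : Type*) [Field F] (h2 : (2 : F) ≠ 0)
    (A : Type*) [NonUnitalNonAssocRing A] [Module F A]
    [SMulCommClass F A A] [IsScalarTower F A A]
    (hright : ∀ a b : A, (b * a) * a - b * (a * a) = 0)
    (circ : A → A → A)
    (hcirc : ∀ x y : A, circ x y = (2 : F)⁻¹ • (x * y + y * x))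
    (jord : A → A → A → A)
    (hjord : ∀ x y z : A, jord x y z = circ (circ x y) z - circ x (circ y z))
    (tern : A → A → A → A)
    (htern : ∀ a b c : A, tern a b c = jord b c a) :
    (∀ a c : A, tern a a c = 0) ∧
    (∀ a b c : A, tern a b c + tern b c a + tern c a b = 0) := by
  have hcomm : ∀ x y : A, circ x y = circ y x := by
    intro x y; rw [hcirc, hcirc, add_comm]
  constructor
  · intro a c
    rw [htern, hjord, hcomm c a, hcomm a (circ a c), sub_self]
  · intro a b c
    rw [htern a b c, htern b c a, htern c a b, hjord, hjord, hjord,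
      hcomm a (circ b c), hcomm b (circ c a), hcomm c (circ a b)]
    abel
end
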